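/- There is an absolute constant c > 0 such that the following holds. Let G be a 2D SLP deriving a 2D string T over a finite alphabet Σ of size N×M. Then there exists a 1D SLP of size at most c·|G|·N deriving the 1D string T[1]·T[2]·⋯·T[N] of length N·M, i.e., the concatenation of all rows of T from top to bottom, where T[i] denotes the i-th row of T. -/

import Mathlib

/-!
## Two-dimensional strings.
A 2D string over alphabet `A` of size `h × w` is represented canonically:
`f i j` is `some` of the character in (0-indexed) row `i`, column `j` when
`i < h` and `j < w`, and `none` outside of the rectangle.  All operations
below produce such canonical representations, so equality of 2D strings
built from them coincides with equality of the dimensions and of all entries.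
-/
structure Str2 (A : Type) where
  h : ℕ
  w : ℕ
  f : ℕ → ℕ → Option A

namespace Str2

variable {A : Type}

/-- Canonical constructor: pads with `none` outside of the `h × w` rectangle. -/
def mk' (h w : ℕ) (g : ℕ → ℕ → Option A) : Str2 A :=
  ⟨h, w, fun i j => if i < h ∧ j < w then g i j else none⟩

/-- The empty 2D string. -/
def empty : Str2 A := ⟨0, 0, fun _ _ => none⟩

/-- The `1 × 1` 2D string consisting of a single character. -/
def single (a : A) : Str2 A := mk' 1 1 fun _ _ => some a

/-- Horizontal concatenation `S ⊞ T` (meaningful when the heights agree). -/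
def hcat (S T : Str2 A) : Str2 A :=
  mk' S.h (S.w + T.w) fun i j => if j < S.w then S.f i j else T.f i (j - S.w)

/-- Vertical concatenation `S ⊟ T` (meaningful when the widths agree). -/
def vcat (S T : Str2 A) : Str2 A :=
  mk' (S.h + T.h) S.w fun i j => if i < S.h then S.f i j else T.f (i - S.h) j

/-- Horizontal concatenation `S₁ ⊞ S₂ ⊞ ⋯ ⊞ S_k` of a list of 2D strings. -/
def hcatList : List (Str2 A) → Str2 A
  | [] => empty
  | S :: rest => rest.foldl hcat S

/-- Vertical concatenation `S₁ ⊟ S₂ ⊟ ⋯ ⊟ S_k` of a list of 2D strings. -/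
def vcatList : List (Str2 A) → Str2 A
  | [] => empty
  | S :: rest => rest.foldl vcat S

/-- The transpose. -/
def transpose (S : Str2 A) : Str2 A := mk' S.w S.h fun i j => S.f j i

/-- The `i`-th row (0-indexed) of `S`, as a `1 × w` 2D string. -/
def rowStr (S : Str2 A) (i : ℕ) : Str2 A := mk' 1 S.w fun _ j => S.f i j

/-- The `j`-th column (0-indexed) of `S`, read top to bottom, as a `1 × h` 2D string. -/
def colStr (S : Str2 A) (j : ℕ) : Str2 A := mk' 1 S.h fun _ i => S.f i j

/-- A height-one 2D string, viewed as an ordinary (1D) string, i.e. a list. -/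
def toList (S : Str2 A) : List A := (List.range S.w).filterMap fun j => S.f 0 j

/-- An ordinary (1D) string viewed as a height-one 2D string. -/
def ofList (l : List A) : Str2 A := mk' 1 l.length fun _ j => l[j]?

/-- The concatenation of all rows of `S` from top to bottom,
as a height-one 2D string of width `h * w`. -/
def rowsConcat (S : Str2 A) : Str2 A :=
  mk' 1 (S.h * S.w) fun _ j => S.f (j / S.w) (j % S.w)

end Str2

/-- The right-hand side of a production of a 2D SLP: a single character,
a horizontal concatenation of two nonterminals, or a vertical concatenation
of two nonterminals. -/
inductive Rhs2 (A V : Type) where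
  | chr : A → Rhs2 A V
  | horiz : V → V → Rhs2 A V
  | vert : V → V → Rhs2 A V

/-- A two-dimensional straight-line program over the alphabet `A`:
a finite set `V` of nonterminals, a starting nonterminal, and a production
map `rhs`.  Acyclicity of the relation "appears in the right-hand side of"
is witnessed by the function `rank`, which strictly decreases from the
left-hand side of each production to the nonterminals on its right-hand side. -/
structure SLP2 (A : Type) where
  V : Type
  fintypeV : Fintype V
  start : V
  rhs : V → Rhs2 A V
  rank : V → ℕ
  rank_horiz : ∀ {X Y Z}, rhs X = Rhs2.horiz Y Z → rank Y < rank X ∧ rank Z < rank X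
  rank_vert : ∀ {X Y Z}, rhs X = Rhs2.vert Y Z → rank Y < rank X ∧ rank Z < rank X

namespace SLP2

variable {A : Type}

/-- Fuel-based evaluation of expansions (with enough fuel it computes the
unique expansion of a nonterminal). -/
def expAux (G : SLP2 A) : ℕ → G.V → Str2 A
  | 0, _ => Str2.empty
  | n + 1, X =>
    match G.rhs X with
    | .chr a => Str2.single a
    | .horiz Y Z => (G.expAux n Y).hcat (G.expAux n Z)
    | .vert Y Z => (G.expAux n Y).vcat (G.expAux n Z)

/-- The (unique) expansion of a nonterminal `X`: since `rank` strictly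
decreases along productions, fuel `rank X + 1` always suffices. -/
def expNT (G : SLP2 A) (X : G.V) : Str2 A := G.expAux (G.rank X + 1) X

/-- The 2D string derived by the SLP. -/
def exp (G : SLP2 A) : Str2 A := G.expNT G.start

/-- Fuel-based computation of the depth of the derivation tree below a
nonterminal (a node labeled by a production `chr σ` has a single leaf child). -/
def depthAux (G : SLP2 A) : ℕ → G.V → ℕ
  | 0, _ => 0
  | n + 1, X =>
    match G.rhs X with
    | .chr _ => 1
    | .horiz Y Z => 1 + max (G.depthAux n Y) (G.depthAux n Z)
    | .vert Y Z => 1 + max (G.depthAux n Y) (G.depthAux n Z)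

/-- The depth of the derivation tree below nonterminal `X`. -/
def depthNT (G : SLP2 A) (X : G.V) : ℕ := G.depthAux (G.rank X + 1) X

/-- The depth of the SLP: the depth of its derivation tree. -/
def depth (G : SLP2 A) : ℕ := G.depthNT G.start

/-- The size of the SLP: the total number of symbols on the right-hand
sides of all productions. -/
def size (G : SLP2 A) : ℕ :=
  letI := G.fintypeV
  ∑ X : G.V, (match G.rhs X with
    | .chr _ => 1
    | .horiz _ _ => 2
    | .vert _ _ => 2)

/-- The number of nonterminals of the SLP. -/
def numNT (G : SLP2 A) : ℕ :=
  letI := G.fintypeV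
  Fintype.card G.V

/-- Well-formedness: dimensions match in every production, i.e. in a
horizontal concatenation both arguments have equal heights, and in a
vertical concatenation both arguments have equal widths. -/
def WF (G : SLP2 A) : Prop :=
  ∀ X : G.V,
    match G.rhs X with
    | .chr _ => True
    | .horiz Y Z => (G.expNT Y).h = (G.expNT Z).h
    | .vert Y Z => (G.expNT Y).w = (G.expNT Z).w

/-- A 1D SLP: a 2D SLP that uses only horizontal concatenations and derives
a string of height `1`. -/
def OneDim (G : SLP2 A) : Prop :=
  (∀ X Y Z, G.rhs X ≠ Rhs2.vert Y Z) ∧ (G.exp).h = 1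

end SLP2

/-!
A nonterminal `(X, i)` derives row `i` of `exp X`. A horizontal production `X → Y ⊞ Z` becomes
`(X, i) → (Y, i) ⊞ (Z, i)`; a vertical one `X → Y ⊟ Z` needs no production of its own, since
row `i` lies entirely in `Y` or in `Z`, so `(X, i)` copies the production of the corresponding
row nonterminal of `Y` or `Z`. Finally `N` nonterminals, the `k`-th deriving rows `0, …, k` of
`exp S` and defined from the `(k-1)`-st and `(S, k)`, concatenate the rows. This gives at most
`|V| N + N ≤ 2 |G| N` nonterminals, each with a right-hand side of size at most two.
-/

namespace Str2

variable {A : Type}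

theorem mk'_congr {h w h' w' : ℕ} {g g' : ℕ → ℕ → Option A} (hh : h = h') (hw : w = w')
    (hg : ∀ i j, i < h → j < w → g i j = g' i j) : mk' h w g = mk' h' w' g' := by
  subst hh hw
  simp only [mk', Str2.mk.injEq, true_and]
  funext i j
  split_ifs with hij
  exacts [hg i j hij.1 hij.2, rfl]

theorem rowStr_single (a : A) : (single a).rowStr 0 = single a :=
  mk'_congr rfl rfl fun i j _ hj => by simp_all [single, mk']

theorem rowStr_hcat (S T : Str2 A) {i : ℕ} (hi : i < S.h) :
    (S.hcat T).rowStr i = (S.rowStr i).hcat (T.rowStr i) :=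
  mk'_congr rfl rfl fun r j hr hj => by
    simp only [rowStr, hcat, mk'] at hj ⊢
    split_ifs <;> first | rfl | omega

theorem rowStr_vcat_of_lt (S T : Str2 A) {i : ℕ} (hi : i < S.h) :
    (S.vcat T).rowStr i = S.rowStr i :=
  mk'_congr rfl rfl fun r j hr hj => by
    simp only [vcat, mk'] at hj ⊢
    split_ifs <;> first | rfl | omega

theorem rowStr_vcat_of_le (S T : Str2 A) {i : ℕ} (hi : S.h ≤ i) (hi' : i < S.h + T.h)
    (hw : S.w = T.w) : (S.vcat T).rowStr i = T.rowStr (i - S.h) :=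
  mk'_congr rfl hw fun r j hr hj => by
    simp only [vcat, mk'] at hj ⊢
    split_ifs <;> first | rfl | omega

/-- The concatenation of the first `k` rows of `S`. -/
def rowsPrefix (S : Str2 A) (k : ℕ) : Str2 A :=
  mk' 1 (k * S.w) fun _ j => S.f (j / S.w) (j % S.w)

theorem rowsPrefix_one (S : Str2 A) : S.rowsPrefix 1 = S.rowStr 0 :=
  mk'_congr rfl (one_mul _) fun _ j _ hj => by
    rw [one_mul] at hj
    rw [Nat.div_eq_of_lt hj, Nat.mod_eq_of_lt hj]

theorem rowsPrefix_succ (S : Str2 A) (k : ℕ) :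
    S.rowsPrefix (k + 1) = (S.rowsPrefix k).hcat (S.rowStr k) :=
  mk'_congr rfl (add_one_mul k S.w) fun i j hi hj => by
    simp only [rowsPrefix, rowStr, mk'] at hj ⊢
    rw [add_one_mul] at hj
    by_cases hjk : j < k * S.w
    · simp [hi, hjk]
    · obtain ⟨r, hr, rfl⟩ : ∃ r < S.w, j = k * S.w + r :=
        ⟨j - k * S.w, by omega, by omega⟩
      have hdiv : (k * S.w + r) / S.w = k := by
        rw [add_comm, Nat.add_mul_div_right _ _ (by omega), Nat.div_eq_of_lt hr, zero_add]
      simp [hi, hr, hdiv, Nat.mod_eq_of_lt hr]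

end Str2

def Rhs2.eval {A V : Type} (e : V → Str2 A) : Rhs2 A V → Str2 A
  | .chr a => Str2.single a
  | .horiz Y Z => (e Y).hcat (e Z)
  | .vert Y Z => (e Y).vcat (e Z)

namespace SLP2

variable {A : Type} (G : SLP2 A)

attribute [local instance] SLP2.fintypeV

theorem rank_induction {P : G.V → Prop} (X : G.V)
    (ih : ∀ X, (∀ Y, G.rank Y < G.rank X → P Y) → P X) : P X :=
  (measure G.rank).wf.induction X ih

theorem eval_rhs_congr {e e' : G.V → Str2 A} {X : G.V}
    (h : ∀ Y, G.rank Y < G.rank X → e Y = e' Y) : (G.rhs X).eval e = (G.rhs X).eval e' := by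
  rcases hX : G.rhs X with a | ⟨Y, Z⟩ | ⟨Y, Z⟩
  · rfl
  · obtain ⟨hY, hZ⟩ := G.rank_horiz hX
    simp only [Rhs2.eval, h Y hY, h Z hZ]
  · obtain ⟨hY, hZ⟩ := G.rank_vert hX
    simp only [Rhs2.eval, h Y hY, h Z hZ]

theorem expAux_succ (n : ℕ) (X : G.V) : G.expAux (n + 1) X = (G.rhs X).eval (G.expAux n) := by
  simp only [expAux]
  cases G.rhs X <;> rfl

theorem expAux_eq_expNT {n : ℕ} {X : G.V} (hn : G.rank X < n) : G.expAux n X = G.expNT X := by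
  induction X using G.rank_induction generalizing n with
  | ih X ih =>
    obtain ⟨n, rfl⟩ := Nat.exists_eq_add_of_lt hn
    rw [expNT, expAux_succ, expAux_succ]
    exact G.eval_rhs_congr fun Y hY => (ih Y hY (by omega)).trans (ih Y hY hY).symm

theorem expNT_eq_eval (X : G.V) : G.expNT X = (G.rhs X).eval G.expNT := by
  rw [expNT, expAux_succ]
  exact G.eval_rhs_congr fun Y hY => G.expAux_eq_expNT hY

theorem expNT_h_pos (X : G.V) : 0 < (G.expNT X).h := by
  induction X using G.rank_induction with
  | ih X ih =>
    rw [expNT_eq_eval]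
    rcases hX : G.rhs X with a | ⟨Y, Z⟩ | ⟨Y, Z⟩
    · exact Nat.one_pos
    · exact ih Y (G.rank_horiz hX).1
    · exact Nat.add_pos_left (ih Y (G.rank_vert hX).1) _

theorem exp_h_pos : 0 < G.exp.h :=
  G.expNT_h_pos G.start

theorem expNT_h_eq_one (hG : ∀ X Y Z, G.rhs X ≠ .vert Y Z) (X : G.V) : (G.expNT X).h = 1 := by
  induction X using G.rank_induction with
  | ih X ih =>
    rw [expNT_eq_eval]
    rcases hX : G.rhs X with a | ⟨Y, Z⟩ | ⟨Y, Z⟩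
    · rfl
    · exact ih Y (G.rank_horiz hX).1
    · exact absurd hX (hG X Y Z)

theorem card_le_size : Fintype.card G.V ≤ G.size := by
  rw [size, Fintype.card_eq_sum_ones]
  exact Finset.sum_le_sum fun X _ => by cases G.rhs X <;> simp

theorem size_le_two_mul_card : G.size ≤ 2 * Fintype.card G.V := by
  rw [size, Fintype.card_eq_sum_ones, Finset.mul_sum]
  exact Finset.sum_le_sum fun X _ => by cases G.rhs X <;> simp

theorem one_le_size : 1 ≤ G.size :=
  (Fintype.card_pos_iff.mpr ⟨G.start⟩).trans_le G.card_le_size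

/-- In the row-linearizing SLP, `inl (Y, i)` derives row `i` of `G.expNT Y` and `inr k`
derives rows `0, …, k` of `G.exp`; this is the production of `inl (X, i)`. -/
def rowRhs (N : ℕ) (X : G.V) (i : Fin N) : Rhs2 A ((G.V × Fin N) ⊕ Fin N) :=
  match hX : G.rhs X with
  | .chr a => .chr a
  | .horiz Y Z => .horiz (.inl (Y, i)) (.inl (Z, i))
  | .vert Y Z =>
    if i < (G.expNT Y).h then rowRhs N Y i
    else rowRhs N Z ⟨i - (G.expNT Y).h, by omega⟩
termination_by G.rank X
decreasing_by
  · exact (G.rank_vert hX).1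
  · exact (G.rank_vert hX).2

variable {G}

theorem rowRhs_of_chr {N : ℕ} {X : G.V} {a : A} (hX : G.rhs X = .chr a) (i : Fin N) :
    G.rowRhs N X i = .chr a := by
  rw [rowRhs]
  split <;> simp_all

theorem rowRhs_of_horiz {N : ℕ} {X Y Z : G.V} (hX : G.rhs X = .horiz Y Z) (i : Fin N) :
    G.rowRhs N X i = .horiz (.inl (Y, i)) (.inl (Z, i)) := by
  rw [rowRhs]
  split <;> simp_all

theorem rowRhs_of_vert {N : ℕ} {X Y Z : G.V} (hX : G.rhs X = .vert Y Z) (i : Fin N) :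
    G.rowRhs N X i = if i < (G.expNT Y).h then G.rowRhs N Y i
      else G.rowRhs N Z ⟨i - (G.expNT Y).h, by omega⟩ := by
  rw [rowRhs]
  split <;> simp_all

theorem rowRhs_cases (N : ℕ) (X : G.V) (i : Fin N) :
    (∃ a, G.rowRhs N X i = .chr a) ∨
      ∃ Y Z i', G.rowRhs N X i = .horiz (.inl (Y, i')) (.inl (Z, i')) ∧
        G.rank Y < G.rank X ∧ G.rank Z < G.rank X := by
  induction X using G.rank_induction generalizing i with
  | ih X ih =>
    rcases hX : G.rhs X with a | ⟨Y, Z⟩ | ⟨Y, Z⟩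
    · exact .inl ⟨a, rowRhs_of_chr hX i⟩
    · exact .inr ⟨Y, Z, i, rowRhs_of_horiz hX i, G.rank_horiz hX⟩
    · obtain ⟨hY, hZ⟩ := G.rank_vert hX
      rw [rowRhs_of_vert hX]
      split
      · rcases ih Y hY i with h | ⟨Y', Z', i', h, hY', hZ'⟩
        exacts [.inl h, .inr ⟨Y', Z', i', h, hY'.trans hY, hZ'.trans hY⟩]
      · rcases ih Z hZ _ with h | ⟨Y', Z', i', h, hY', hZ'⟩
        exacts [.inl h, .inr ⟨Y', Z', i', h, hY'.trans hZ, hZ'.trans hZ⟩]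

variable (G)

def rowsRhs : (G.V × Fin G.exp.h) ⊕ Fin G.exp.h → Rhs2 A ((G.V × Fin G.exp.h) ⊕ Fin G.exp.h)
  | .inl (X, i) => G.rowRhs _ X i
  | .inr ⟨0, h⟩ => G.rowRhs _ G.start ⟨0, h⟩
  | .inr ⟨k + 1, h⟩ => .horiz (.inr ⟨k, by omega⟩) (.inl (G.start, ⟨k + 1, h⟩))

def rowsRank : (G.V × Fin G.exp.h) ⊕ Fin G.exp.h → ℕ
  | .inl (X, _) => G.rank X
  | .inr k => Finset.univ.sup G.rank + k + 1

variable {G}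

theorem rowsRhs_cases (W : (G.V × Fin G.exp.h) ⊕ Fin G.exp.h) :
    (∃ a, G.rowsRhs W = .chr a) ∨
      ∃ P Q, G.rowsRhs W = .horiz P Q ∧
        G.rowsRank P < G.rowsRank W ∧ G.rowsRank Q < G.rowsRank W := by
  have hstart := Finset.le_sup (f := G.rank) (Finset.mem_univ G.start)
  rcases W with ⟨X, i⟩ | ⟨_ | k, hk⟩
  · rcases G.rowRhs_cases _ X i with h | ⟨Y, Z, i', h, hY, hZ⟩
    exacts [.inl h, .inr ⟨_, _, h, hY, hZ⟩]
  · rcases G.rowRhs_cases _ G.start ⟨0, hk⟩ with h | ⟨Y, Z, i', h, hY, hZ⟩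
    · exact .inl h
    · exact .inr ⟨_, _, h, by simp only [rowsRank]; omega, by simp only [rowsRank]; omega⟩
  · exact .inr ⟨_, _, rfl, by simp only [rowsRank]; omega, by simp only [rowsRank]; omega⟩

theorem rowsRhs_ne_vert (W P Q : (G.V × Fin G.exp.h) ⊕ Fin G.exp.h) :
    G.rowsRhs W ≠ .vert P Q := by
  rcases rowsRhs_cases W with ⟨a, h⟩ | ⟨_, _, h, _⟩ <;> simp [h]

theorem rowsRank_lt_of_horiz {W P Q : (G.V × Fin G.exp.h) ⊕ Fin G.exp.h}
    (h : G.rowsRhs W = .horiz P Q) :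
    G.rowsRank P < G.rowsRank W ∧ G.rowsRank Q < G.rowsRank W := by
  rcases rowsRhs_cases W with ⟨a, h'⟩ | ⟨P', Q', h', hP, hQ⟩
  · simp [h'] at h
  · obtain ⟨rfl, rfl⟩ := Rhs2.horiz.inj (h'.symm.trans h)
    exact ⟨hP, hQ⟩

variable (G)

abbrev rowsSLP : SLP2 A where
  V := (G.V × Fin G.exp.h) ⊕ Fin G.exp.h
  fintypeV := inferInstance
  start := .inr ⟨G.exp.h - 1, Nat.sub_one_lt G.exp_h_pos.ne'⟩
  rhs := G.rowsRhs
  rank := G.rowsRank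
  rank_horiz := rowsRank_lt_of_horiz
  rank_vert h := absurd h (rowsRhs_ne_vert _ _ _)

variable {G}

theorem rowsSLP_expNT_inl (hG : G.WF) (X : G.V) (i : Fin G.exp.h) (hi : i < (G.expNT X).h) :
    G.rowsSLP.expNT (.inl (X, i)) = (G.expNT X).rowStr i := by
  induction X using G.rank_induction generalizing i with
  | ih X ih =>
    have hwf := hG X
    rw [G.expNT_eq_eval X] at hi
    rw [G.rowsSLP.expNT_eq_eval, G.expNT_eq_eval X]
    change (G.rowRhs _ X i).eval G.rowsSLP.expNT = _
    rcases hX : G.rhs X with a | ⟨Y, Z⟩ | ⟨Y, Z⟩ <;> simp only [hX] at hwf hi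
    · rw [rowRhs_of_chr hX, Nat.lt_one_iff.1 hi]
      exact (Str2.rowStr_single a).symm
    · obtain ⟨hY, hZ⟩ := G.rank_horiz hX
      change i < (G.expNT Y).h at hi
      rw [rowRhs_of_horiz hX]
      change (G.rowsSLP.expNT _).hcat (G.rowsSLP.expNT _) = ((G.expNT Y).hcat (G.expNT Z)).rowStr i
      rw [ih Y hY i hi, ih Z hZ i (hwf ▸ hi), Str2.rowStr_hcat _ _ hi]
    · obtain ⟨hY, hZ⟩ := G.rank_vert hX
      change i < (G.expNT Y).h + (G.expNT Z).h at hi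
      change _ = ((G.expNT Y).vcat (G.expNT Z)).rowStr i
      rw [rowRhs_of_vert hX]
      split_ifs with hiY
      · rw [Str2.rowStr_vcat_of_lt _ _ hiY]
        exact (G.rowsSLP.expNT_eq_eval _).symm.trans (ih Y hY i hiY)
      · rw [Str2.rowStr_vcat_of_le _ _ (not_lt.1 hiY) hi hwf]
        exact (G.rowsSLP.expNT_eq_eval _).symm.trans (ih Z hZ _ (by simp only; omega))

theorem rowsSLP_expNT_inr (hG : G.WF) (k : ℕ) (hk : k < G.exp.h) :
    G.rowsSLP.expNT (.inr ⟨k, hk⟩) = G.exp.rowsPrefix (k + 1) := by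
  induction k with
  | zero =>
    calc G.rowsSLP.expNT (.inr ⟨0, hk⟩) = G.rowsSLP.expNT (.inl (G.start, ⟨0, hk⟩)) := by
          rw [expNT_eq_eval, expNT_eq_eval]
          rfl
      _ = G.exp.rowStr 0 := rowsSLP_expNT_inl hG _ _ G.exp_h_pos
      _ = G.exp.rowsPrefix 1 := (Str2.rowsPrefix_one _).symm
  | succ k ih =>
    rw [Str2.rowsPrefix_succ, ← ih (by omega), expNT_eq_eval]
    exact congrArg (Str2.hcat _) (rowsSLP_expNT_inl hG G.start ⟨k + 1, hk⟩ hk)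

theorem rowsSLP_exp (hG : G.WF) : G.rowsSLP.exp = G.exp.rowsConcat := by
  rw [exp, rowsSLP_expNT_inr hG, Nat.sub_add_cancel G.exp_h_pos]
  rfl

theorem rowsSLP_oneDim : G.rowsSLP.OneDim :=
  ⟨rowsRhs_ne_vert, G.rowsSLP.expNT_h_eq_one rowsRhs_ne_vert _⟩

theorem rowsSLP_wf : G.rowsSLP.WF := by
  intro W
  have h_one := G.rowsSLP.expNT_h_eq_one rowsRhs_ne_vert
  split
  · trivial
  · rw [h_one, h_one]
  · exact absurd ‹_› (rowsRhs_ne_vert _ _ _)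

theorem rowsSLP_size : G.rowsSLP.size ≤ 4 * G.size * G.exp.h :=
  calc G.rowsSLP.size ≤ 2 * (Fintype.card G.V * G.exp.h + G.exp.h) := by
        simpa [Fintype.card_sum] using G.rowsSLP.size_le_two_mul_card
    _ ≤ 2 * (G.size * G.exp.h + G.size * G.exp.h) := by
        gcongr
        exacts [G.card_le_size, le_mul_of_one_le_left (Nat.zero_le _) G.one_le_size]
    _ = 4 * G.size * G.exp.h := by ring

end SLP2

/-- row linearization. There is an absolute constant `c > 0`
such that: given a 2D SLP `G` deriving a 2D string `T` of size `N × M`, there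
is a 1D SLP of size at most `c * |G| * N` deriving the 1D string
`T[1] ⬝ T[2] ⬝ ⋯ ⬝ T[N]` of length `N * M`, the concatenation of all rows of
`T` from top to bottom. -/
theorem row_linearization :
    ∃ c : ℕ, 0 < c ∧
      ∀ (A : Type) (_ : Fintype A) (G : SLP2 A), G.WF →
        ∃ G' : SLP2 A, G'.WF ∧ G'.OneDim ∧
          G'.size ≤ c * G.size * (G.exp).h ∧
          G'.exp = (G.exp).rowsConcat :=
  ⟨4, by norm_num, fun _ _ G hG =>
    ⟨G.rowsSLP, SLP2.rowsSLP_wf, SLP2.rowsSLP_oneDim, SLP2.rowsSLP_size, SLP2.rowsSLP_exp hG⟩⟩
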